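/- arXiv:2409.08970 — 5 statements merged into one kernel-verified Lean document; each statement's English description precedes it below -/
import Mathlib

section
/- Let n ≥ 1, let L̃ ∈ ℝ^{n×n} be symmetric with eigendecomposition L̃ = U diag(λ) Uᵀ, where U is orthogonal and the entries of λ ∈ ℝⁿ are pairwise distinct. Let ρ ∈ ℝ, v ∈ ℝⁿ, set z = Uᵀv and assume every entry of z is nonzero. Let L = L̃ + ρ v vᵀ have eigendecomposition L = X diag(μ) Xᵀ with X orthogonal, where the entries of μ ∈ ℝⁿ are pairwise distinct and {μ_1,…,μ_n} ∩ {λ_1,…,λ_n} = ∅. Then there exists a vector a ∈ ℝⁿ such that X = U diag(z) C(λ,μ) diag(a), and for this same a one has Xᵀ = − diag(a) C(μ,λ) diag(z) Uᵀ. -/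
/-!
Put `W = Uᵀ X`. Conjugating `L X = X diag(μ)` by `U` turns it into the secular equation
`W diag(μ) = diag(λ) W + ρ z (vᵀ X)`, which entrywise reads `W_ij (μ_j - λ_i) = ρ z_i (vᵀ X)_j`.
As `μ_j ≠ λ_i` this determines `W = diag(z) C(λ, μ) diag(a)` with `a = -ρ Xᵀ v`, so `X = U W`;
the formula for `Xᵀ` follows from `C(λ, μ)ᵀ = -C(μ, λ)`.
-/

open Matrix Real

/-- Cauchy matrix `C(μ, λ)` with entries `1 / (μ_i − λ_j)`. -/
noncomputable def cauchyMatrix {n : ℕ} (μ lam : Fin n → ℝ) : Matrix (Fin n) (Fin n) ℝ :=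
  Matrix.of fun i j => 1 / (μ i - lam j)

theorem cauchyMatrix_transpose {n : ℕ} (μ lam : Fin n → ℝ) :
    (cauchyMatrix μ lam)ᵀ = -cauchyMatrix lam μ := by
  ext i j
  simp only [transpose_apply, Matrix.neg_apply, cauchyMatrix, of_apply]
  rw [← neg_sub, div_neg]

section

variable {ι R : Type*} [Fintype ι] [DecidableEq ι] [CommRing R]

theorem mul_eq_mul_diagonal_of_eq_mul_diagonal_mul_transpose {L X : Matrix ι ι R} {mu : ι → R}
    (hX : Xᵀ * X = 1) (hL : L = X * diagonal mu * Xᵀ) : L * X = X * diagonal mu := by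
  rw [hL, Matrix.mul_assoc, hX, Matrix.mul_one]

theorem transpose_mul_rankOneUpdate_mul {U X D : Matrix ι ι R} (v : ι → R) (ρ : R)
    (hU : Uᵀ * U = 1) :
    Uᵀ * (U * D * Uᵀ + ρ • vecMulVec v v) * X
      = D * (Uᵀ * X) + ρ • vecMulVec (Uᵀ *ᵥ v) (v ᵥ* X) := by
  rw [Matrix.mul_add, Matrix.add_mul, ← Matrix.mul_assoc, ← Matrix.mul_assoc, hU,
    Matrix.one_mul, Matrix.mul_smul, Matrix.smul_mul, mul_vecMulVec, vecMulVec_mul,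
    Matrix.mul_assoc]

end

theorem eq_diagonal_mul_cauchyMatrix_mul_diagonal {n : ℕ} {W : Matrix (Fin n) (Fin n) ℝ}
    {lam mu z w : Fin n → ℝ} {ρ : ℝ} (hdisj : ∀ i j, mu i ≠ lam j)
    (hW : W * diagonal mu = diagonal lam * W + ρ • vecMulVec z w) :
    W = diagonal z * cauchyMatrix lam mu * diagonal (-ρ • w) := by
  ext i j
  have hij := congrFun (congrFun hW i) j
  simp only [mul_diagonal, diagonal_mul, Matrix.add_apply, Matrix.smul_apply, vecMulVec_apply,
    smul_eq_mul] at hij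
  have hne : lam i - mu j ≠ 0 := sub_ne_zero.mpr (hdisj j i).symm
  simp only [mul_diagonal, diagonal_mul, cauchyMatrix, of_apply, Pi.smul_apply, smul_eq_mul]
  field_simp
  linear_combination -hij

theorem stmt0_general (n : ℕ)
    (Lt L U X : Matrix (Fin n) (Fin n) ℝ)
    (lam mu v z : Fin n → ℝ) (ρ : ℝ)
    (hLt_dec : Lt = U * Matrix.diagonal lam * Uᵀ)
    (hU_orth : U * Uᵀ = 1)
    (hz : z = Uᵀ *ᵥ v)
    (hL : L = Lt + ρ • Matrix.vecMulVec v v)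
    (hL_dec : L = X * Matrix.diagonal mu * Xᵀ)
    (hX_orth : X * Xᵀ = 1)
    (hdisj : ∀ i j, mu i ≠ lam j) :
    ∃ a : Fin n → ℝ,
      X = U * Matrix.diagonal z * cauchyMatrix lam mu * Matrix.diagonal a ∧
      Xᵀ = -(Matrix.diagonal a * cauchyMatrix mu lam * Matrix.diagonal z * Uᵀ) := by
  have hUtU : Uᵀ * U = 1 := mul_eq_one_comm.mp hU_orth
  have hsecular : Uᵀ * X * diagonal mu
      = diagonal lam * (Uᵀ * X) + ρ • vecMulVec z (v ᵥ* X) := by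
    rw [hz, ← transpose_mul_rankOneUpdate_mul v ρ hUtU, ← hLt_dec, ← hL, Matrix.mul_assoc _ L,
      mul_eq_mul_diagonal_of_eq_mul_diagonal_mul_transpose (mul_eq_one_comm.mp hX_orth) hL_dec,
      Matrix.mul_assoc]
  have hX : X = U * diagonal z * cauchyMatrix lam mu * diagonal (-ρ • (v ᵥ* X)) := by
    conv_lhs => rw [← Matrix.one_mul X, ← hU_orth, Matrix.mul_assoc,
      eq_diagonal_mul_cauchyMatrix_mul_diagonal hdisj hsecular]
    simp only [Matrix.mul_assoc]
  refine ⟨-ρ • (v ᵥ* X), hX, ?_⟩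
  conv_lhs => rw [hX]
  simp only [transpose_mul, diagonal_transpose, cauchyMatrix_transpose, Matrix.mul_neg,
    Matrix.neg_mul, Matrix.mul_assoc]

/-- For a symmetric matrix `L̃ = U diag(λ) Uᵀ` with distinct eigenvalues and a
rank-one update `L = L̃ + ρ v vᵀ = X diag(μ) Xᵀ` with distinct eigenvalues disjoint from `λ`,
if `z = Uᵀ v` has no zero entries, then `X = U diag(z) C(λ, μ) diag(a)` and
`Xᵀ = − diag(a) C(μ, λ) diag(z) Uᵀ` for some vector `a`. -/
theorem stmt0 (n : ℕ) (hn : 1 ≤ n)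
    (Lt L U X : Matrix (Fin n) (Fin n) ℝ)
    (lam mu v z : Fin n → ℝ) (ρ : ℝ)
    (hLt_symm : Lt.IsSymm)
    (hLt_dec : Lt = U * Matrix.diagonal lam * Uᵀ)
    (hU_orth : U * Uᵀ = 1)
    (hlam_distinct : Function.Injective lam)
    (hz : z = Uᵀ *ᵥ v)
    (hz_ne : ∀ i, z i ≠ 0)
    (hL : L = Lt + ρ • Matrix.vecMulVec v v)
    (hL_dec : L = X * Matrix.diagonal mu * Xᵀ)
    (hX_orth : X * Xᵀ = 1)
    (hmu_distinct : Function.Injective mu)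
    (hdisj : ∀ i j, mu i ≠ lam j) :
    ∃ a : Fin n → ℝ,
      X = U * Matrix.diagonal z * cauchyMatrix lam mu * Matrix.diagonal a ∧
      Xᵀ = -(Matrix.diagonal a * cauchyMatrix mu lam * Matrix.diagonal z * Uᵀ) :=
  stmt0_general n Lt L U X lam mu v z ρ hLt_dec hU_orth hz hL hL_dec hX_orth hdisj
end

section
/- Let n ≥ 1, let L̃ ∈ ℝ^{n×n} be symmetric with eigendecomposition L̃ = U diag(λ) Uᵀ, where U is orthogonal and the entries of λ ∈ ℝⁿ are pairwise distinct. Let ρ ∈ ℝ, v ∈ ℝⁿ, set z = Uᵀv and assume every entry of z is nonzero. Let L = L̃ + ρ v vᵀ have eigenvalues μ_1,…,μ_n that are pairwise distinct and disjoint from {λ_1,…,λ_n}. Then there exists a ∈ ℝⁿ such that the matrix diag(a) C(μ,λ) diag(z) is orthogonal. -/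
open Matrix

/-- With `L̃ = U diag(λ) Uᵀ` (`U` orthogonal, `λ` pairwise distinct),
`z = Uᵀ v` entrywise nonzero, and `L = L̃ + ρ v vᵀ` having pairwise distinct eigenvalues
`μ_1, …, μ_n` disjoint from the `λ_j`, there is a vector `a` making
`diag(a) C(μ, λ) diag(z)` an orthogonal matrix. -/
theorem stmt5 (n : ℕ) (hn : 1 ≤ n)
    (Lt L U : Matrix (Fin n) (Fin n) ℝ)
    (lam mu v z : Fin n → ℝ) (ρ : ℝ)
    (hLt_symm : Lt.IsSymm)
    (hLt_dec : Lt = U * Matrix.diagonal lam * Uᵀ)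
    (hU_orth : U * Uᵀ = 1)
    (hlam_distinct : Function.Injective lam)
    (hz : z = Uᵀ *ᵥ v)
    (hz_ne : ∀ i, z i ≠ 0)
    (hL : L = Lt + ρ • Matrix.vecMulVec v v)
    (hmu_eig : ∃ X : Matrix (Fin n) (Fin n) ℝ, X * Xᵀ = 1 ∧ L = X * Matrix.diagonal mu * Xᵀ)
    (hmu_distinct : Function.Injective mu)
    (hdisj : ∀ i j, mu i ≠ lam j) :
    ∃ a : Fin n → ℝ,
      (Matrix.diagonal a * cauchyMatrix mu lam * Matrix.diagonal z) *
        (Matrix.diagonal a * cauchyMatrix mu lam * Matrix.diagonal z)ᵀ = 1 := by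
  obtain ⟨X, hX, hXdec⟩ := hmu_eig
  have hXtX : Xᵀ * X = 1 := mul_eq_one_comm.mp hX
  have hUtU : Uᵀ * U = 1 := mul_eq_one_comm.mp hU_orth
  set Y : Matrix (Fin n) (Fin n) ℝ := Uᵀ * X with hY
  set c : Fin n → ℝ := z ᵥ* Y with hc
  -- left side : Uᵀ L X = diag(lam) Y + ρ • z cᵀ
  have hvX : v ᵥ* X = c := by
    rw [hc, hY, ← Matrix.vecMul_vecMul, hz, Matrix.mulVec_transpose,
      Matrix.vecMul_vecMul v U Uᵀ, hU_orth, Matrix.vecMul_one]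
  have hEnt : ∀ i k, (Uᵀ * Matrix.vecMulVec v v) i k = z i * v k := by
    intro i k
    simp [Matrix.mul_apply, Matrix.vecMulVec_apply, hz, Matrix.mulVec, dotProduct,
      Finset.sum_mul, mul_assoc]
  have hmulvv : Uᵀ * Matrix.vecMulVec v v * X = Matrix.vecMulVec z c := by
    ext i j
    rw [Matrix.mul_apply]
    simp only [hEnt, Matrix.vecMulVec_apply, ← hvX, Matrix.vecMul, dotProduct, Finset.mul_sum]
    exact Finset.sum_congr rfl fun k _ => by ring
  have hleft : Uᵀ * L * X = Matrix.diagonal lam * Y + ρ • Matrix.vecMulVec z c := by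
    rw [hL, hLt_dec, Matrix.mul_add, Matrix.add_mul]
    congr 1
    · rw [hY]
      have : Uᵀ * (U * Matrix.diagonal lam * Uᵀ) = Matrix.diagonal lam * Uᵀ := by
        rw [← Matrix.mul_assoc, ← Matrix.mul_assoc, hUtU, Matrix.one_mul]
      rw [this, Matrix.mul_assoc]
    · rw [Matrix.mul_smul, Matrix.smul_mul, hmulvv]
  have hright : Uᵀ * L * X = Y * Matrix.diagonal mu := by
    rw [hXdec, hY]
    calc Uᵀ * (X * Matrix.diagonal mu * Xᵀ) * X
        = Uᵀ * X * Matrix.diagonal mu * (Xᵀ * X) := by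
          simp only [Matrix.mul_assoc]
      _ = Uᵀ * X * Matrix.diagonal mu := by rw [hXtX, Matrix.mul_one]
  have E : Matrix.diagonal lam * Y + ρ • Matrix.vecMulVec z c = Y * Matrix.diagonal mu := by
    rw [← hleft, hright]
  have eigeq : ∀ j i, lam j * Y j i + ρ * (z j * c i) = Y j i * mu i := by
    intro j i
    have := congrFun (congrFun E j) i
    simpa [Matrix.diagonal_mul, Matrix.mul_diagonal, Matrix.vecMulVec_apply] using this
  refine ⟨fun i => ρ * c i, ?_⟩
  have hW : Matrix.diagonal (fun i => ρ * c i) * cauchyMatrix mu lam * Matrix.diagonal z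
      = Yᵀ := by
    ext i j
    have hne : mu i - lam j ≠ 0 := sub_ne_zero.mpr (hdisj i j)
    have h := eigeq j i
    simp only [Matrix.mul_diagonal, Matrix.diagonal_mul, cauchyMatrix, Matrix.of_apply,
      Matrix.transpose_apply]
    field_simp
    linarith [h]
  rw [hW, Matrix.transpose_transpose]
  have hYt : Yᵀ = Xᵀ * U := by rw [hY, Matrix.transpose_mul, Matrix.transpose_transpose]
  rw [hYt, hY]
  calc Xᵀ * U * (Uᵀ * X) = Xᵀ * (U * Uᵀ) * X := by simp only [Matrix.mul_assoc]
    _ = 1 := by rw [hU_orth, Matrix.mul_one, hXtX]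
end

section
/- Let n ≥ 2 and let l, m be nonnegative integers with l + m ≤ 2n − 3. Then Σ_{k=1}^{n−1} (1 − cos²(kπ/n)) · U_l(cos(kπ/n)) · U_m(cos(kπ/n)) = (n/2) if l = m and 0 otherwise. -/
open Polynomial Finset Real

/-!
Since `U_l(cos θ) sin θ = sin((l+1)θ)`, the summand at `θ = kπ/n` is
`sin((l+1)θ) sin((m+1)θ) = (cos((m-l)θ) - cos((l+m+2)θ)) / 2`. For an integer `j` not divisible
by `2n`, the Dirichlet-kernel formula gives `Σ_{k=1}^{n-1} cos(jkπ/n) = -(1 + cos jπ)/2`, which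
depends only on the parity of `j`. The bound `l + m ≤ 2n - 3` puts both `l + m + 2` and, for
`l ≠ m`, `m - l` in this range; they have the same parity, so the two sums cancel. For `l = m` the
first sum is `n - 1` and the second is `-1`.
-/

theorem sum_Icc_cos_int_mul_pi_div (n : ℕ) (hn : n ≠ 0) (j : ℤ) (hj : ¬ (2 * n : ℤ) ∣ j) :
    ∑ k ∈ Icc 1 (n - 1), cos (j * (k * π / n)) = -(1 + cos (j * π)) / 2 := by
  have hn' : (n : ℝ) ≠ 0 := by exact_mod_cast hn
  set a : ℝ := j * π / n with ha
  set c : ℝ := j * π / 2 with hc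
  have hsin : sin (a / 2) ≠ 0 := by
    rw [Ne, sin_eq_zero_iff]
    rintro ⟨k, hk⟩
    refine hj ⟨k, ?_⟩
    have : (j : ℝ) = 2 * n * k := by
      rw [ha] at hk
      field_simp at hk
      linarith [pi_pos]
    exact_mod_cast this
  have hsin_mul_cos : sin c * cos c = 0 := by
    have h := sin_two_mul c
    rw [hc, mul_div_cancel₀ _ two_ne_zero, sin_int_mul_pi] at h
    linarith
  have hcos : cos (j * π) = 2 * cos c ^ 2 - 1 := by
    rw [← cos_two_mul, hc, mul_div_cancel₀ _ two_ne_zero]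
  have hIcc : Icc 1 (n - 1) = Ico 1 n := by ext; simp only [mem_Icc, mem_Ico]; omega
  have hterm (k : ℕ) : cos (j * (↑(1 + k) * π / n)) = cos (a * k + a) := by
    rw [ha]; push_cast; ring_nf
  have hangle1 : ((n - 1 : ℕ) : ℝ) * a / 2 = c - a / 2 := by
    rw [ha, hc, Nat.cast_sub (by omega)]; field_simp; ring
  have hangle2 : ((n - 1 : ℕ) - 1 : ℝ) * a / 2 + a = c := by
    rw [ha, hc, Nat.cast_sub (by omega)]; field_simp; ring
  rw [hIcc, sum_Ico_eq_sum_range]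
  simp only [hterm]
  apply mul_left_cancel₀ hsin
  rw [sin_mul_sum_cos, hangle1, hangle2, sin_sub, hcos]
  linear_combination cos (a / 2) * hsin_mul_cos

theorem sin_sq_mul_U_eval_cos_mul_U_eval_cos (l m : ℤ) (θ : ℝ) :
    sin θ ^ 2 * (Chebyshev.U ℝ l).eval (cos θ) * (Chebyshev.U ℝ m).eval (cos θ)
      = (cos (((m - l : ℤ) : ℝ) * θ) - cos (((l + m + 2 : ℤ) : ℝ) * θ)) / 2 := by
  calc _ = ((Chebyshev.U ℝ m).eval (cos θ) * sin θ)
          * ((Chebyshev.U ℝ l).eval (cos θ) * sin θ) := by ring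
    _ = sin ((m + 1) * θ) * sin ((l + 1) * θ) := by
      rw [Chebyshev.U_real_cos, Chebyshev.U_real_cos]
    _ = _ := by
      rw [eq_div_iff two_ne_zero, mul_comm _ (2 : ℝ), ← mul_assoc, two_mul_sin_mul_sin]
      push_cast
      ring_nf

/-- **discrete orthogonality of Chebyshev polynomials of the second kind.**
For `n ≥ 2` and nonnegative integers `l, m` with `l + m ≤ 2n − 3`,
`Σ_{k=1}^{n−1} (1 − cos²(kπ/n)) U_l(cos(kπ/n)) U_m(cos(kπ/n))` equals `n/2` if `l = m`
and `0` otherwise. -/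
theorem stmt9 (n : ℕ) (hn : 2 ≤ n) (l m : ℕ) (hlm : l + m ≤ 2 * n - 3) :
    ∑ k ∈ Finset.Icc 1 (n - 1),
        (1 - (Real.cos (k * Real.pi / n)) ^ 2)
          * (Polynomial.Chebyshev.U ℝ (l : ℤ)).eval (Real.cos (k * Real.pi / n))
          * (Polynomial.Chebyshev.U ℝ (m : ℤ)).eval (Real.cos (k * Real.pi / n))
      = if l = m then (n : ℝ) / 2 else 0 := by
  have hn0 : n ≠ 0 := by omega
  have not_dvd {j : ℤ} (hj0 : j ≠ 0) (hj : |j| < 2 * n) : ¬ (2 * n : ℤ) ∣ j :=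
    fun h ↦ hj0 (Int.eq_zero_of_abs_lt_dvd h hj)
  have hsum_add := sum_Icc_cos_int_mul_pi_div n hn0 (l + m + 2)
    (not_dvd (by omega) (abs_lt.mpr ⟨by omega, by omega⟩))
  simp_rw [← sin_sq, sin_sq_mul_U_eval_cos_mul_U_eval_cos, ← sum_div, sum_sub_distrib, hsum_add]
  split_ifs with heq
  · subst heq
    have hcos_top : cos (((l + l + 2 : ℤ) : ℝ) * π) = 1 := by
      rw [show ((l + l + 2 : ℤ) : ℝ) * π = ((l + 1 : ℤ) : ℝ) * (2 * π) by push_cast; ring]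
      exact cos_int_mul_two_pi _
    rw [hcos_top]
    simp [Nat.cast_sub (by omega : 1 ≤ n)]
  · rw [sum_Icc_cos_int_mul_pi_div n hn0 (m - l)
      (not_dvd (by omega) (abs_lt.mpr ⟨by omega, by omega⟩)),
      show ((l + m + 2 : ℤ) : ℝ) * π = ((m - l : ℤ) : ℝ) * π + ((l + 1 : ℤ) : ℝ) * (2 * π) by
      push_cast; ring, cos_add_int_mul_two_pi]
    ring
end

section
/- Let n ≥ 2, let s ∈ ℝ^{n−1}, and let θ ∈ (0, π) satisfy sin(nθ) ≠ 0. Then cos θ ∉ {cos(jπ/n) : j = 1,…,n−1}, and Σ_{j=1}^{n−1} s_j / (cos θ − cos(jπ/n)) = (2 / sin(nθ)) · Σ_{ℓ=1}^{n−1} b_ℓ · sin(ℓθ), where b_ℓ = Σ_{j=1}^{n−1} (−1)^{j+1} · s_j · sin(ℓjπ/n) / sin(jπ/n). -/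
/-!
Write `φⱼ = jπ/n`. A Christoffel–Darboux type telescoping identity for the sines gives
`2 (cos θ - cos φⱼ) ∑_{l<n} sin(l φⱼ) sin(l θ) = (-1)^(j+1) sin φⱼ sin(n θ)`,
because `sin(n φⱼ) = 0` and `sin((n-1) φⱼ) = (-1)^(j+1) sin φⱼ`. Since `sin φⱼ > 0` for
`0 < j < n`, the right side is nonzero when `sin(nθ) ≠ 0`; this separates `cos θ` from the
nodes and expresses each `1 / (cos θ - cos φⱼ)` as a sine sum. Summing against `s` and
exchanging the two sums gives the identity.
-/

open Finset Real

theorem two_mul_cos_sub_cos_mul_sum_range_sin_mul_sin (φ θ : ℝ) (m : ℕ) :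
    2 * (cos θ - cos φ) * ∑ l ∈ range (m + 1), sin (l * φ) * sin (l * θ)
      = sin (m * φ) * sin ((m + 1) * θ) - sin ((m + 1) * φ) * sin (m * θ) := by
  induction m with
  | zero => simp
  | succ m ih =>
    rw [sum_range_succ, mul_add, ih]
    push_cast
    rw [show ((m : ℝ) + 1) * θ = m * θ + θ by ring, show ((m : ℝ) + 1) * φ = m * φ + φ by ring,
      show ((m : ℝ) + 1 + 1) * θ = m * θ + θ + θ by ring,
      show ((m : ℝ) + 1 + 1) * φ = m * φ + φ + φ by ring]
    simp only [sin_add, cos_add]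
    ring_nf
    simp only [sin_sq]
    ring

theorem two_mul_cos_sub_cos_node_mul_sum_range_sin_mul_sin (n j : ℕ) (θ : ℝ) :
    2 * (cos θ - cos (j * π / n)) * ∑ l ∈ range n, sin (l * (j * π / n)) * sin (l * θ)
      = (-1) ^ (j + 1) * sin (j * π / n) * sin (n * θ) := by
  cases n with
  | zero => simp
  | succ m =>
    have hn : ((m + 1 : ℕ) : ℝ) ≠ 0 := by positivity
    have h_top : ((m : ℝ) + 1) * (j * π / (m + 1 : ℕ)) = j * π := by field_simp; push_cast; ring
    have h_pred : (m : ℝ) * (j * π / (m + 1 : ℕ)) = j * π - j * π / (m + 1 : ℕ) := by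
      field_simp; push_cast; ring
    rw [two_mul_cos_sub_cos_mul_sum_range_sin_mul_sin, h_top, h_pred, sin_nat_mul_pi,
      sin_nat_mul_pi_sub]
    push_cast
    ring

theorem sin_node_pos {n j : ℕ} (hj : 0 < j) (hjn : j < n) : 0 < sin (j * π / n) := by
  have hn : (0 : ℝ) < n := by exact_mod_cast hj.trans hjn
  apply sin_pos_of_pos_of_lt_pi (by positivity)
  rw [div_lt_iff₀ hn]
  have : (j : ℝ) < n := by exact_mod_cast hjn
  nlinarith [pi_pos]

theorem cos_sub_cos_node_ne_zero {n j : ℕ} {θ : ℝ} (hsin : sin (n * θ) ≠ 0) (hj : 0 < j)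
    (hjn : j < n) : cos θ - cos (j * π / n) ≠ 0 := by
  intro h
  have key := two_mul_cos_sub_cos_node_mul_sum_range_sin_mul_sin n j θ
  rw [h, mul_zero, zero_mul] at key
  exact mul_ne_zero (mul_ne_zero (pow_ne_zero _ (by norm_num)) (sin_node_pos hj hjn).ne') hsin
    key.symm

theorem inv_cos_sub_cos_node {n j : ℕ} {θ : ℝ} (hsin : sin (n * θ) ≠ 0) (hj : 0 < j)
    (hjn : j < n) :
    (cos θ - cos (j * π / n))⁻¹ = 2 / sin (n * θ) * ((-1) ^ (j + 1) / sin (j * π / n)) *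
      ∑ l ∈ range n, sin (l * (j * π / n)) * sin (l * θ) := by
  have key := two_mul_cos_sub_cos_node_mul_sum_range_sin_mul_sin n j θ
  have hφ := (sin_node_pos hj hjn).ne'
  rw [inv_eq_one_div, eq_comm, eq_div_iff (cos_sub_cos_node_ne_zero hsin hj hjn)]
  calc (2 / sin (n * θ) * ((-1) ^ (j + 1) / sin (j * π / n)) *
        ∑ l ∈ range n, sin (l * (j * π / n)) * sin (l * θ)) * (cos θ - cos (j * π / n))
      = (-1) ^ (j + 1) / (sin (n * θ) * sin (j * π / n)) *
          (2 * (cos θ - cos (j * π / n)) * ∑ l ∈ range n, sin (l * (j * π / n)) * sin (l * θ)) := by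
        ring
    _ = ((-1) ^ (j + 1)) ^ 2 := by rw [key]; field_simp
    _ = 1 := by rw [← pow_mul, Even.neg_one_pow ⟨j + 1, by ring⟩]

theorem sum_Icc_one_sub_one_eq_sum_range {M : Type*} [AddCommMonoid M] (n : ℕ) {f : ℕ → M}
    (h0 : f 0 = 0) : ∑ l ∈ Icc 1 (n - 1), f l = ∑ l ∈ range n, f l := by
  refine sum_subset (fun l hl => by simp only [mem_Icc, mem_range] at hl ⊢; omega) fun l hl hl' => ?_
  obtain rfl : l = 0 := by simp only [mem_Icc, mem_range] at hl hl'; omega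
  exact h0

theorem stmt11_general (n : ℕ) (s : ℕ → ℝ) (θ : ℝ)
    (hsin : Real.sin (n * θ) ≠ 0) :
    (∀ j ∈ Finset.Icc 1 (n - 1), Real.cos θ ≠ Real.cos (j * Real.pi / n)) ∧
    ∑ j ∈ Finset.Icc 1 (n - 1), s j / (Real.cos θ - Real.cos (j * Real.pi / n))
      = (2 / Real.sin (n * θ)) *
          ∑ l ∈ Finset.Icc 1 (n - 1),
            (∑ j ∈ Finset.Icc 1 (n - 1),
                (-1 : ℝ) ^ (j + 1) * s j * Real.sin (l * j * Real.pi / n)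
                  / Real.sin (j * Real.pi / n))
              * Real.sin (l * θ) := by
  have node : ∀ j ∈ Icc 1 (n - 1), 0 < j ∧ j < n := fun j hj => by
    simp only [mem_Icc] at hj; omega
  refine ⟨fun j hj => sub_ne_zero.mp (cos_sub_cos_node_ne_zero hsin (node j hj).1 (node j hj).2),
    ?_⟩
  simp only [mul_sum, sum_mul]
  rw [sum_comm]
  refine sum_congr rfl fun j hj => ?_
  rw [div_eq_mul_inv, inv_cos_sub_cos_node hsin (node j hj).1 (node j hj).2,
    ← sum_Icc_one_sub_one_eq_sum_range n (by simp), mul_sum, mul_sum]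
  refine sum_congr rfl fun l _ => ?_
  rw [show (l : ℝ) * j * π / n = l * (j * π / n) by ring]
  ring

/-- **core identity of the Fast DCT+.** For `n ≥ 2`, `s ∈ ℝ^{n−1}`, and
`θ ∈ (0, π)` with `sin(nθ) ≠ 0`, the point `cos θ` differs from every node `cos(jπ/n)`, and
`Σ_{j=1}^{n−1} s_j / (cos θ − cos(jπ/n)) = (2 / sin(nθ)) Σ_{ℓ=1}^{n−1} b_ℓ sin(ℓθ)` where
`b_ℓ = Σ_{j=1}^{n−1} (−1)^{j+1} s_j sin(ℓjπ/n) / sin(jπ/n)`. -/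
theorem stmt11 (n : ℕ) (hn : 2 ≤ n) (s : ℕ → ℝ) (θ : ℝ)
    (hθ0 : 0 < θ) (hθπ : θ < Real.pi)
    (hsin : Real.sin (n * θ) ≠ 0) :
    (∀ j ∈ Finset.Icc 1 (n - 1), Real.cos θ ≠ Real.cos (j * Real.pi / n)) ∧
    ∑ j ∈ Finset.Icc 1 (n - 1), s j / (Real.cos θ - Real.cos (j * Real.pi / n))
      = (2 / Real.sin (n * θ)) *
          ∑ l ∈ Finset.Icc 1 (n - 1),
            (∑ j ∈ Finset.Icc 1 (n - 1),
                (-1 : ℝ) ^ (j + 1) * s j * Real.sin (l * j * Real.pi / n)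
                  / Real.sin (j * Real.pi / n))
              * Real.sin (l * θ) :=
  stmt11_general n s θ hsin
end

section
/- Let n ≥ 1 and let L_{k−1} ∈ ℝ^{n×n} be symmetric with eigendecomposition L_{k−1} = X_{k−1} diag(μ_{k−1}) X_{k−1}ᵀ, where X_{k−1} is orthogonal and the entries of μ_{k−1} ∈ ℝⁿ are pairwise distinct. Let ρ_k ∈ ℝ, v_k ∈ ℝⁿ, set z_k = X_{k−1}ᵀ v_k and assume every entry of z_k is nonzero. Suppose L_k = L_{k−1} + ρ_k v_k v_kᵀ has eigendecomposition L_k = X_k diag(μ_k) X_kᵀ with X_k orthogonal, the entries of μ_k ∈ ℝⁿ pairwise distinct, and {(μ_k)_1,…,(μ_k)_n} ∩ {(μ_{k−1})_1,…,(μ_{k−1})_n} = ∅. Then there exists a_k ∈ ℝⁿ such that X_k = X_{k−1} diag(z_k) C(μ_{k−1}, μ_k) diag(a_k). -/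
open Matrix

/-- **inductive step for rank-`k` updates.** If
`L_{k−1} = X_{k−1} diag(μ_{k−1}) X_{k−1}ᵀ` with `X_{k−1}` orthogonal and `μ_{k−1}` pairwise
distinct, `z_k = X_{k−1}ᵀ v_k` has no zero entry, and
`L_k = L_{k−1} + ρ_k v_k v_kᵀ = X_k diag(μ_k) X_kᵀ` with `X_k` orthogonal, `μ_k` pairwise
distinct and disjoint from `μ_{k−1}`, then
`X_k = X_{k−1} diag(z_k) C(μ_{k−1}, μ_k) diag(a_k)` for some `a_k`. -/
theorem stmt13 (n : ℕ) (hn : 1 ≤ n)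
    (Lprev Lk Xprev Xk : Matrix (Fin n) (Fin n) ℝ)
    (muPrev muK vk zk : Fin n → ℝ) (ρk : ℝ)
    (hLprev_symm : Lprev.IsSymm)
    (hLprev_dec : Lprev = Xprev * Matrix.diagonal muPrev * Xprevᵀ)
    (hXprev_orth : Xprev * Xprevᵀ = 1)
    (hmuPrev_distinct : Function.Injective muPrev)
    (hzk : zk = Xprevᵀ *ᵥ vk)
    (hzk_ne : ∀ i, zk i ≠ 0)
    (hLk : Lk = Lprev + ρk • Matrix.vecMulVec vk vk)
    (hLk_dec : Lk = Xk * Matrix.diagonal muK * Xkᵀ)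
    (hXk_orth : Xk * Xkᵀ = 1)
    (hmuK_distinct : Function.Injective muK)
    (hdisj : ∀ i j, muK i ≠ muPrev j) :
    ∃ ak : Fin n → ℝ,
      Xk = Xprev * Matrix.diagonal zk * cauchyMatrix muPrev muK * Matrix.diagonal ak := by
  have hXprev_orth' : Xprevᵀ * Xprev = 1 := mul_eq_one_comm.mp hXprev_orth
  have hXk_orth' : Xkᵀ * Xk = 1 := mul_eq_one_comm.mp hXk_orth
  set Y := Xprevᵀ * Xk with hY
  set w := Xkᵀ *ᵥ vk with hw
  refine ⟨fun j => -ρk * w j, ?_⟩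
  -- key identity
  have h1 : Xprevᵀ * Lk * Xk = Y * Matrix.diagonal muK := by
    rw [hLk_dec, hY]
    calc Xprevᵀ * (Xk * Matrix.diagonal muK * Xkᵀ) * Xk
        = Xprevᵀ * Xk * Matrix.diagonal muK * (Xkᵀ * Xk) := by
          simp only [Matrix.mul_assoc]
      _ = Xprevᵀ * Xk * Matrix.diagonal muK := by rw [hXk_orth', Matrix.mul_one]
  have h3 : Xprevᵀ * Matrix.vecMulVec vk vk * Xk = Matrix.vecMulVec zk w := by
    ext i j
    simp only [Matrix.mul_apply, Matrix.vecMulVec_apply, Matrix.transpose_apply, hzk, hw,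
      Matrix.mulVec, dotProduct, Finset.sum_mul, Finset.mul_sum]
    apply Finset.sum_congr rfl
    intro a _
    apply Finset.sum_congr rfl
    intro b _
    ring
  have h2 : Xprevᵀ * Lk * Xk = Matrix.diagonal muPrev * Y + ρk • Matrix.vecMulVec zk w := by
    rw [hLk, hLprev_dec, Matrix.mul_add, Matrix.add_mul, Matrix.mul_smul, Matrix.smul_mul, h3]
    congr 1
    calc Xprevᵀ * (Xprev * Matrix.diagonal muPrev * Xprevᵀ) * Xk
        = (Xprevᵀ * Xprev) * Matrix.diagonal muPrev * (Xprevᵀ * Xk) := by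
          simp only [Matrix.mul_assoc]
      _ = Matrix.diagonal muPrev * Y := by rw [hXprev_orth', Matrix.one_mul, hY]
  have key : Matrix.diagonal muPrev * Y + ρk • Matrix.vecMulVec zk w = Y * Matrix.diagonal muK :=
    h2 ▸ h1
  have hYeq : Matrix.diagonal zk * cauchyMatrix muPrev muK *
      Matrix.diagonal (fun j => -ρk * w j) = Y := by
    ext i j
    have hne : muPrev i - muK j ≠ 0 := sub_ne_zero.mpr fun h => hdisj j i h.symm
    have hk : muPrev i * Y i j + ρk * (zk i * w j) = Y i j * muK j := by
      have := congrFun (congrFun key i) j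
      simpa [Matrix.add_apply, Matrix.diagonal_mul, Matrix.mul_diagonal,
        Matrix.vecMulVec_apply, Matrix.smul_apply, smul_eq_mul] using this
    rw [Matrix.mul_diagonal, Matrix.diagonal_mul]
    simp only [cauchyMatrix, Matrix.of_apply]
    field_simp
    nlinarith [hk, sq_nonneg (muPrev i - muK j)]
  calc Xk = (Xprev * Xprevᵀ) * Xk := by rw [hXprev_orth, Matrix.one_mul]
    _ = Xprev * Y := by rw [Matrix.mul_assoc, hY]
    _ = Xprev * (Matrix.diagonal zk * cauchyMatrix muPrev muK *
          Matrix.diagonal (fun j => -ρk * w j)) := by rw [hYeq]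
    _ = Xprev * Matrix.diagonal zk * cauchyMatrix muPrev muK *
          Matrix.diagonal (fun j => -ρk * w j) := by simp only [Matrix.mul_assoc]
end
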